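/- arXiv:1404.0122 — 3 statements merged into one kernel-verified Lean document; each statement's English description precedes it below -/
import Mathlib

section
/- Let 0 < α₁ < α₂ and let X_i ~ Gamma(α_i, α_i) (shape α_i, rate α_i) for i = 1, 2. Define Δ(x) = P(X₂ < x) − P(X₁ < x). Then there exists a unique point x₀ > 0 such that Δ(x) < 0 for 0 < x < x₀ and Δ(x) > 0 for x > x₀. -/
/-!
For `t > 0` the log-ratio of the densities of `Gamma(a₂, a₂)` and `Gamma(a₁, a₁)` is
`L + (a₂ - a₁) (log t - t)`, which increases on `(0, 1]`, decreases on `[1, ∞)` and tends to `-∞`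
at both ends. So the density difference `g` is negative on `(0, b)`, positive on `(b, c)` and
negative on `(c, ∞)`, and `Δ x = ∫₀ˣ g` decreases from `Δ 0 = 0`, increases, then decreases to
`Δ ∞ = 1 - 1 = 0`. Hence `Δ < 0` on `(0, b]`, `Δ > 0` on `[c, ∞)` (in particular `b < c`), and
`Δ` crosses zero exactly once in between.
-/

open MeasureTheory ProbabilityTheory Real Set Filter Topology

structure HasNegPosNegSigns (f : ℝ → ℝ) (b c : ℝ) : Prop where
  pos : 0 < b
  le : b ≤ c
  neg_left : ∀ t ∈ Ioo 0 b, f t < 0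
  pos_mid : ∀ t ∈ Ioo b c, 0 < f t
  neg_right : ∀ t ∈ Ioi c, f t < 0

structure HasNegPosSigns (f : ℝ → ℝ) (x₀ : ℝ) : Prop where
  pos : 0 < x₀
  neg_left : ∀ x ∈ Ioo 0 x₀, f x < 0
  pos_right : ∀ x ∈ Ioi x₀, 0 < f x

variable {f g : ℝ → ℝ}

theorem HasNegPosNegSigns.congr_sign {b c : ℝ} (h : HasNegPosNegSigns f b c)
    (hfg : ∀ t, 0 < t → SignType.sign (g t) = SignType.sign (f t)) :
    HasNegPosNegSigns g b c where
  pos := h.pos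
  le := h.le
  neg_left t ht := sign_eq_neg_one_iff.1 <| (hfg t ht.1).trans (sign_neg (h.neg_left t ht))
  pos_mid t ht := sign_eq_one_iff.1 <|
    (hfg t (h.pos.trans ht.1)).trans (sign_pos (h.pos_mid t ht))
  neg_right t ht := sign_eq_neg_one_iff.1 <|
    (hfg t (h.pos.trans (h.le.trans_lt ht))).trans (sign_neg (h.neg_right t ht))

theorem HasNegPosSigns.congr {x₀ : ℝ} (h : HasNegPosSigns f x₀) (hfg : EqOn f g (Ioi 0)) :
    HasNegPosSigns g x₀ where
  pos := h.pos
  neg_left x hx := hfg hx.1 ▸ h.neg_left x hx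
  pos_right x hx := hfg (h.pos.trans hx) ▸ h.pos_right x hx

theorem HasNegPosSigns.unique {x y : ℝ} (hx : HasNegPosSigns f x) (hy : HasNegPosSigns f y) :
    x = y := by
  have key : ∀ {x y : ℝ}, HasNegPosSigns f x → HasNegPosSigns f y → x ≤ y := by
    intro x y hx hy
    by_contra! hyx
    have hneg := hx.neg_left ((x + y) / 2) ⟨by linarith [hy.pos], by linarith⟩
    linarith [hy.pos_right ((x + y) / 2) (by rw [mem_Ioi]; linarith)]
  exact (key hx hy).antisymm (key hy hx)

theorem exists_hasNegPosNegSigns_of_unimodal {ψ : ℝ → ℝ} {m : ℝ} (hm : 0 < m)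
    (hcont : ContinuousOn ψ (Ioi 0)) (hmono : StrictMonoOn ψ (Ioc 0 m))
    (hanti : StrictAntiOn ψ (Ici m)) (hzero : Tendsto ψ (𝓝[>] 0) atBot)
    (htop : Tendsto ψ atTop atBot) : ∃ b c, HasNegPosNegSigns ψ b c := by
  by_cases hpeak : ψ m ≤ 0
  · refine ⟨m, m, ⟨hm, le_rfl, fun t ht => ?_, fun t ht => (lt_asymm ht.1 ht.2).elim,
      fun t ht => ?_⟩⟩
    · exact (hmono ⟨ht.1, ht.2.le⟩ ⟨hm, le_rfl⟩ ht.2).trans_le hpeak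
    · exact (hanti self_mem_Ici (mem_Ici.2 (le_of_lt ht)) ht).trans_le hpeak
  push Not at hpeak
  obtain ⟨u, hu, ⟨hu0, hum⟩⟩ := ((hzero.eventually_lt_atBot 0).and (Ioo_mem_nhdsGT hm)).exists
  obtain ⟨v, hv, hmv⟩ := ((htop.eventually_lt_atBot 0).and (eventually_gt_atTop m)).exists
  obtain ⟨b, hb, hψb⟩ := intermediate_value_Ioo hum.le
    (hcont.mono fun t ht => hu0.trans_le ht.1) ⟨hu, hpeak⟩
  obtain ⟨c, hc, hψc⟩ := intermediate_value_Ioo' hmv.le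
    (hcont.mono fun t ht => hm.trans_le ht.1) ⟨hv, hpeak⟩
  have hb0 : 0 < b := hu0.trans hb.1
  refine ⟨b, c, ⟨hb0, hb.2.le.trans hc.1.le, fun t ht => ?_, fun t ht => ?_, fun t ht => ?_⟩⟩
  · exact hψb ▸ hmono ⟨ht.1, (ht.2.trans hb.2).le⟩ ⟨hb0, hb.2.le⟩ ht.2
  · rcases le_total t m with htm | hmt
    · exact hψb ▸ hmono ⟨hb0, hb.2.le⟩ ⟨hb0.trans ht.1, htm⟩ ht.1
    · exact hψc ▸ hanti hmt hc.1.le ht.2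
  · exact hψc ▸ hanti hc.1.le (hc.1.le.trans (le_of_lt ht)) ht

theorem strictMonoOn_primitive (hint : ∀ y z, IntervalIntegrable g volume y z) (a : ℝ)
    {s : Set ℝ} [s.OrdConnected] (hpos : ∀ t ∈ interior s, 0 < g t) :
    StrictMonoOn (fun x => ∫ t in a..x, g t) s := fun y hy z hz hyz => by
  have hpos_on := intervalIntegral.intervalIntegral_pos_of_pos_on (hint y z)
    (fun t ht => hpos t (interior_mono (Set.Icc_subset s hy hz) (by rwa [interior_Icc]))) hyz
  rw [← intervalIntegral.integral_interval_sub_left (hint a z) (hint a y)] at hpos_on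
  exact sub_pos.1 hpos_on

theorem strictAntiOn_primitive (hint : ∀ y z, IntervalIntegrable g volume y z) (a : ℝ)
    {s : Set ℝ} [s.OrdConnected] (hneg : ∀ t ∈ interior s, g t < 0) :
    StrictAntiOn (fun x => ∫ t in a..x, g t) s := by
  have := strictMonoOn_primitive (g := fun t => -g t) (fun y z => (hint y z).neg) a
    (fun t ht => neg_pos.2 (hneg t ht))
  simp only [intervalIntegral.integral_neg] at this
  exact fun y hy z hz hyz => neg_lt_neg_iff.1 (this hy hz hyz)

theorem HasNegPosNegSigns.exists_hasNegPosSigns_primitive {b c : ℝ}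
    (hg : HasNegPosNegSigns g b c) (hint : ∀ y z, IntervalIntegrable g volume y z)
    (hlim : Tendsto (fun x => ∫ t in (0)..x, g t) atTop (𝓝 0)) :
    ∃ x₀, HasNegPosSigns (fun x => ∫ t in (0)..x, g t) x₀ := by
  set G := fun x => ∫ t in (0)..x, g t
  have anti_left : StrictAntiOn G (Icc 0 b) :=
    strictAntiOn_primitive hint 0 (by simpa using hg.neg_left)
  have mono_mid : StrictMonoOn G (Icc b c) :=
    strictMonoOn_primitive hint 0 (by simpa using hg.pos_mid)
  have anti_right : StrictAntiOn G (Ici c) :=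
    strictAntiOn_primitive hint 0 (by simpa using hg.neg_right)
  have neg_left : ∀ x ∈ Ioc 0 b, G x < 0 := fun x hx => by
    simpa [G] using anti_left ⟨le_rfl, hg.pos.le⟩ ⟨hx.1.le, hx.2⟩ hx.1
  have pos_right : ∀ x ∈ Ici c, 0 < G x := fun x hx => by
    have hle : 0 ≤ G (x + 1) := le_of_tendsto hlim <| eventually_atTop.2 ⟨x + 1, fun z hz =>
      anti_right.antitoneOn (mem_Ici.2 (by linarith [mem_Ici.1 hx]))
        (mem_Ici.2 (by linarith [mem_Ici.1 hx])) hz⟩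
    exact hle.trans_lt (anti_right hx (mem_Ici.2 (by linarith [mem_Ici.1 hx])) (lt_add_one x))
  obtain ⟨x₀, hx₀, hGx₀⟩ := intermediate_value_Ioo hg.le
    (intervalIntegral.continuous_primitive hint 0).continuousOn
    ⟨neg_left b ⟨hg.pos, le_rfl⟩, pos_right c self_mem_Ici⟩
  refine ⟨x₀, hg.pos.trans hx₀.1, fun x hx => ?_, fun x hx => ?_⟩
  · rcases le_or_gt x b with hxb | hbx
    · exact neg_left x ⟨hx.1, hxb⟩
    · exact (mono_mid ⟨hbx.le, (hx.2.trans hx₀.2).le⟩ ⟨hx₀.1.le, hx₀.2.le⟩ hx.2).trans_eq hGx₀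
  · rcases le_or_gt x c with hxc | hcx
    · exact hGx₀.symm.trans_lt (mono_mid ⟨hx₀.1.le, hx₀.2.le⟩ ⟨(hx₀.1.trans hx).le, hxc⟩ hx)
    · exact pos_right x hcx.le

theorem strictMonoOn_log_sub_self : StrictMonoOn (fun x => log x - x) (Ioc 0 1) := by
  refine strictMonoOn_of_deriv_pos (convex_Ioc 0 1)
    ((continuousOn_log.mono fun x hx => hx.1.ne').sub continuousOn_id) fun x hx => ?_
  rw [interior_Ioc] at hx
  have hderiv : HasDerivAt (fun x => log x - x) (x⁻¹ - 1) x :=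
    (hasDerivAt_log hx.1.ne').sub (hasDerivAt_id' x)
  rw [hderiv.deriv, sub_pos]
  exact (one_lt_inv₀ hx.1).2 hx.2

theorem strictAntiOn_log_sub_self : StrictAntiOn (fun x => log x - x) (Ici 1) := by
  refine strictAntiOn_of_deriv_neg (convex_Ici 1)
    ((continuousOn_log.mono fun x hx => (zero_lt_one.trans_le hx).ne').sub continuousOn_id)
    fun x hx => ?_
  rw [interior_Ici] at hx
  have hderiv : HasDerivAt (fun x => log x - x) (x⁻¹ - 1) x :=
    (hasDerivAt_log (zero_lt_one.trans hx).ne').sub (hasDerivAt_id' x)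
  rw [hderiv.deriv, sub_neg]
  exact inv_lt_one_of_one_lt₀ hx

theorem tendsto_log_sub_self_nhdsGT_zero : Tendsto (fun x => log x - x) (𝓝[>] 0) atBot :=
  tendsto_atBot_mono' _ (eventually_mem_nhdsWithin.mono fun x hx => by linarith [mem_Ioi.1 hx])
    tendsto_log_nhdsGT_zero

theorem tendsto_log_sub_self_atTop : Tendsto (fun x => log x - x) atTop atBot := by
  refine tendsto_atBot_mono' atTop ?_
    (tendsto_neg_atTop_atBot.comp (tendsto_id.atTop_div_const two_pos))
  filter_upwards [isLittleO_log_id_atTop.bound (by norm_num : (0 : ℝ) < 1 / 2),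
    eventually_ge_atTop 0] with x hlog hx
  simp only [norm_eq_abs, id, abs_of_nonneg hx] at hlog
  simp only [Function.comp_apply, id]
  linarith [le_abs_self (log x)]

theorem Real.sign_exp_sub_exp (x y : ℝ) :
    SignType.sign (exp x - exp y) = SignType.sign (x - y) := by
  rcases lt_trichotomy x y with h | rfl | h
  · rw [_root_.sign_neg (sub_neg.2 h), _root_.sign_neg (sub_neg.2 (exp_lt_exp.2 h))]
  · simp
  · rw [_root_.sign_pos (sub_pos.2 h), _root_.sign_pos (sub_pos.2 (exp_lt_exp.2 h))]

namespace ProbabilityTheory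

noncomputable def gammaLogPDF (a r x : ℝ) : ℝ :=
  a * log r - log (Gamma a) + (a - 1) * log x - r * x

variable {a r : ℝ}

theorem gammaPDFReal_eq_exp_gammaLogPDF (ha : 0 < a) (hr : 0 < r) {x : ℝ} (hx : 0 < x) :
    gammaPDFReal a r x = exp (gammaLogPDF a r x) := by
  rw [gammaPDFReal, if_pos hx.le, rpow_def_of_pos hr, rpow_def_of_pos hx, gammaLogPDF, exp_sub,
    exp_add, exp_sub, exp_log (Gamma_pos_of_pos ha), mul_comm a, mul_comm (a - 1), exp_neg]
  ring

theorem integrable_gammaPDFReal (ha : 0 < a) (hr : 0 < r) : Integrable (gammaPDFReal a r) := by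
  refine ⟨(measurable_gammaPDFReal a r).aestronglyMeasurable, ?_⟩
  rw [hasFiniteIntegral_iff_ofReal (ae_of_all _ (gammaPDFReal_nonneg ha hr))]
  exact (lintegral_gammaPDF_eq_one ha hr).trans_lt ENNReal.one_lt_top

theorem cdf_gammaMeasure_eq_intervalIntegral (ha : 0 < a) (hr : 0 < r) {x : ℝ} (hx : 0 ≤ x) :
    cdf (gammaMeasure a r) x = ∫ t in (0)..x, gammaPDFReal a r t := by
  rw [cdf_gammaMeasure_eq_integral ha hr, intervalIntegral.integral_of_le hx,
    ← integral_Icc_eq_integral_Ioc]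
  exact setIntegral_eq_of_subset_of_forall_sdiff_eq_zero measurableSet_Iic Icc_subset_Iic_self
    fun t ht => if_neg fun h0 => ht.2 ⟨h0, ht.1⟩

theorem gammaMeasure_Iio_toReal (ha : 0 < a) (hr : 0 < r) (x : ℝ) :
    (gammaMeasure a r (Iio x)).toReal = cdf (gammaMeasure a r) x := by
  have := isProbabilityMeasure_gammaMeasure ha hr
  rw [cdf_eq_real, measureReal_def, gammaMeasure, measure_congr Iio_ae_eq_Iic]

theorem exists_hasNegPosNegSigns_gammaPDFReal_sub {a₁ a₂ : ℝ} (h₁ : 0 < a₁) (h₁₂ : a₁ < a₂) :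
    ∃ b c, HasNegPosNegSigns (fun t => gammaPDFReal a₂ a₂ t - gammaPDFReal a₁ a₁ t) b c := by
  have h₂ : 0 < a₂ := h₁.trans h₁₂
  have hd : 0 < a₂ - a₁ := sub_pos.2 h₁₂
  set L := a₂ * log a₂ - log (Gamma a₂) - (a₁ * log a₁ - log (Gamma a₁))
  obtain ⟨b, c, h⟩ :=
    exists_hasNegPosNegSigns_of_unimodal (ψ := fun t => L + (a₂ - a₁) * (log t - t)) one_pos
      (continuousOn_const.add (continuousOn_const.mul
        ((continuousOn_log.mono fun t ht => (mem_Ioi.1 ht).ne').sub continuousOn_id)))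
      (fun x hx y hy hxy => by
        simpa using mul_lt_mul_of_pos_left (strictMonoOn_log_sub_self hx hy hxy) hd)
      (fun x hx y hy hxy => by
        simpa using mul_lt_mul_of_pos_left (strictAntiOn_log_sub_self hx hy hxy) hd)
      (tendsto_atBot_add_const_left _ L (tendsto_log_sub_self_nhdsGT_zero.const_mul_atBot hd))
      (tendsto_atBot_add_const_left _ L (tendsto_log_sub_self_atTop.const_mul_atBot hd))
  refine ⟨b, c, h.congr_sign fun t ht => ?_⟩
  rw [gammaPDFReal_eq_exp_gammaLogPDF h₂ h₂ ht, gammaPDFReal_eq_exp_gammaLogPDF h₁ h₁ ht,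
    sign_exp_sub_exp]
  congr 1
  simp only [gammaLogPDF, L]
  ring

end ProbabilityTheory

/-- Monotonicity of gamma CDFs: for `0 < α₁ < α₂` and `Xᵢ ~ Gamma(αᵢ, αᵢ)`,
the difference `Δ(x) = P(X₂ < x) − P(X₁ < x)` changes sign exactly once on `(0,∞)`:
it is negative before a unique point `x₀` and positive after it. -/
theorem gamma_cdf_diff_sign_change (a1 a2 : ℝ) (h1 : 0 < a1) (h12 : a1 < a2) :
    ∃! x0 : ℝ, 0 < x0 ∧
      (∀ x : ℝ, 0 < x → x < x0 →
        (gammaMeasure a2 a2 (Iio x)).toReal - (gammaMeasure a1 a1 (Iio x)).toReal < 0) ∧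
      (∀ x : ℝ, x0 < x →
        0 < (gammaMeasure a2 a2 (Iio x)).toReal - (gammaMeasure a1 a1 (Iio x)).toReal) := by
  have h2 : 0 < a2 := h1.trans h12
  simp only [gammaMeasure_Iio_toReal h1 h1, gammaMeasure_Iio_toReal h2 h2]
  have hi₁ := integrable_gammaPDFReal h1 h1
  have hi₂ := integrable_gammaPDFReal h2 h2
  set g := fun t => gammaPDFReal a2 a2 t - gammaPDFReal a1 a1 t
  have hcdf (x : ℝ) (hx : 0 ≤ x) :
      cdf (gammaMeasure a2 a2) x - cdf (gammaMeasure a1 a1) x = ∫ t in (0)..x, g t := by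
    rw [cdf_gammaMeasure_eq_intervalIntegral h2 h2 hx,
      cdf_gammaMeasure_eq_intervalIntegral h1 h1 hx, intervalIntegral.integral_sub hi₂.intervalIntegrable hi₁.intervalIntegrable]
  have hlim : Tendsto (fun x => ∫ t in (0)..x, g t) atTop (𝓝 0) := by
    have := (tendsto_cdf_atTop (gammaMeasure a2 a2)).sub (tendsto_cdf_atTop (gammaMeasure a1 a1))
    rw [sub_self] at this
    exact this.congr' ((eventually_ge_atTop 0).mono hcdf)
  obtain ⟨b, c, hsigns⟩ := exists_hasNegPosNegSigns_gammaPDFReal_sub h1 h12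
  obtain ⟨x0, hx0⟩ :=
    hsigns.exists_hasNegPosSigns_primitive (fun _ _ => (hi₂.sub hi₁).intervalIntegrable) hlim
  replace hx0 := hx0.congr fun x hx => (hcdf x (le_of_lt hx)).symm
  refine ⟨x0, ⟨hx0.pos, fun x hx hxx0 => hx0.neg_left x ⟨hx, hxx0⟩, hx0.pos_right⟩, ?_⟩
  rintro y ⟨hy, hyneg, hypos⟩
  exact HasNegPosSigns.unique ⟨hy, fun x hx => hyneg x hx.1 hx.2, hypos⟩ hx0
end

section
/- For α₂ > α₁ > 0, the difference of gamma CDFs Δ(x) = P(Gamma(α₂,α₂) < x) − P(Gamma(α₁,α₁) < x) satisfies: there exists an interval (a, b) containing x = 1 such that Δ'(x) > 0 for x ∈ (a, b) and Δ'(x) < 0 for x ∈ (0, a) ∪ (b, ∞). -/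
/-!
With `g(x) = x e^{1-x}` (`bump` below), the Gamma(α, α) density is
`p_α(x) = p_α(1) g(x)^α / x` for `x > 0`, so `p_{α₂}(x) - p_{α₁}(x)` has the sign of
`g(x)^{α₂-α₁} - p_{α₁}(1) / p_{α₂}(1)`. As `g` rises from `g(0) = 0` to `g(1) = 1` and then decays
to `0`, this is positive exactly on an interval around `1`, provided `p_{α₁}(1) < p_{α₂}(1)`.
That inequality comes from integrating the representation, `∫₀^∞ g(x)^α / x dx = 1 / p_α(1)`,
whose integrand strictly decreases in `α` because `g ≤ 1` with equality only at `1`.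
-/

open MeasureTheory ProbabilityTheory Real Set
open Filter Topology

lemma exists_Ioo_superlevel_of_unimodal {f : ℝ → ℝ} {l m c : ℝ} (hlm : l ≤ m)
    (hf : ContinuousOn f (Ici l)) (hmono : StrictMonoOn f (Icc l m))
    (hanti : StrictAntiOn f (Ici m)) (hl : f l < c) (hm : c < f m)
    (htop : ∀ᶠ x in atTop, f x < c) :
    ∃ a b, l < a ∧ a < m ∧ m < b ∧ (∀ x ∈ Ioo a b, c < f x) ∧
      ∀ x, (l ≤ x ∧ x < a) ∨ b < x → f x < c := by
  obtain ⟨a, ⟨hla, ham⟩, hfa⟩ : ∃ a ∈ Ioo l m, f a = c :=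
    intermediate_value_Ioo hlm (hf.mono Icc_subset_Ici_self) ⟨hl, hm⟩
  obtain ⟨M, hMc, hmM⟩ := (htop.and (eventually_gt_atTop m)).exists
  obtain ⟨b, ⟨hmb, hbM⟩, hfb⟩ : ∃ b ∈ Ioo m M, f b = c :=
    intermediate_value_Ioo' hmM.le (hf.mono (Icc_subset_Ici_iff hmM.le |>.2 hlm)) ⟨hMc, hm⟩
  refine ⟨a, b, hla, ham, hmb, fun x ⟨hax, hxb⟩ => ?_, ?_⟩
  · rcases le_total x m with hxm | hmx
    · exact hfa ▸ hmono ⟨hla.le, ham.le⟩ ⟨hla.le.trans hax.le, hxm⟩ hax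
    · exact hfb ▸ hanti hmx hmb.le hxb
  · rintro x (⟨hlx, hxa⟩ | hbx)
    · exact hfa ▸ hmono ⟨hlx, (hxa.trans ham).le⟩ ⟨hla.le, ham.le⟩ hxa
    · exact hfb ▸ hanti hmb.le (hmb.trans hbx).le hbx

noncomputable def bump (x : ℝ) : ℝ := x * exp (1 - x)

lemma bump_zero : bump 0 = 0 := zero_mul _

lemma bump_one : bump 1 = 1 := by simp [bump]

lemma bump_pos {x : ℝ} (hx : 0 < x) : 0 < bump x := mul_pos hx (exp_pos _)

lemma bump_nonneg {x : ℝ} (hx : 0 ≤ x) : 0 ≤ bump x := mul_nonneg hx (exp_pos _).le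

lemma continuous_bump : Continuous bump := by unfold bump; fun_prop

lemma hasDerivAt_bump (x : ℝ) : HasDerivAt bump ((1 - x) * exp (1 - x)) x := by
  have h : HasDerivAt (fun y => y * exp (1 - y))
      (1 * exp (1 - x) + x * (exp (1 - x) * (0 - 1))) x :=
    (hasDerivAt_id x).mul ((hasDerivAt_const x (1 : ℝ)).sub (hasDerivAt_id x)).exp
  exact h.congr_deriv (by ring)

lemma strictMonoOn_bump : StrictMonoOn bump (Iic 1) := by
  refine strictMonoOn_of_deriv_pos (convex_Iic 1) continuous_bump.continuousOn fun x hx => ?_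
  rw [interior_Iic] at hx
  rw [(hasDerivAt_bump x).deriv]
  exact mul_pos (sub_pos.2 hx) (exp_pos _)

lemma strictAntiOn_bump : StrictAntiOn bump (Ici 1) := by
  refine strictAntiOn_of_deriv_neg (convex_Ici 1) continuous_bump.continuousOn fun x hx => ?_
  rw [interior_Ici] at hx
  rw [(hasDerivAt_bump x).deriv]
  exact mul_neg_of_neg_of_pos (sub_neg.2 hx) (exp_pos _)

lemma bump_lt_one {x : ℝ} (hx : x ≠ 1) : bump x < 1 := by
  rw [← bump_one]
  rcases hx.lt_or_gt with hx | hx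
  · exact strictMonoOn_bump hx.le self_mem_Iic hx
  · exact strictAntiOn_bump self_mem_Ici hx.le hx

lemma bump_le_one (x : ℝ) : bump x ≤ 1 := by
  rcases eq_or_ne x 1 with rfl | hx
  · exact bump_one.le
  · exact (bump_lt_one hx).le

lemma tendsto_bump_atTop : Tendsto bump atTop (𝓝 0) := by
  have h := (tendsto_pow_mul_exp_neg_atTop_nhds_zero 1).const_mul (exp 1)
  simp only [pow_one, mul_zero] at h
  refine h.congr fun x => ?_
  rw [bump, sub_eq_add_neg, exp_add]
  ring

lemma bump_rpow_div_eq {α x : ℝ} (hx : 0 < x) :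
    bump x ^ α / x = exp α * (x ^ (α - 1) * exp (-(α * x))) := by
  rw [bump, mul_rpow hx.le (exp_pos _).le, ← exp_mul, rpow_sub_one hx.ne',
    show (1 - x) * α = α + -(α * x) by ring, exp_add]
  field_simp

lemma gammaPDFReal_self_eq {α x : ℝ} (hx : 0 < x) :
    gammaPDFReal α α x = gammaPDFReal α α 1 * (bump x ^ α / x) := by
  rw [bump_rpow_div_eq hx, gammaPDFReal, gammaPDFReal, if_pos hx.le, if_pos zero_le_one,
    one_rpow, mul_one, mul_one, exp_neg α]
  field_simp

lemma integrableOn_bump_rpow_div {α : ℝ} (hα : 0 < α) :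
    IntegrableOn (fun x => bump x ^ α / x) (Ioi 0) := by
  have h := integrableOn_rpow_mul_exp_neg_mul_rpow (p := 1) (s := α - 1) (b := α)
    (by linarith) zero_lt_one hα
  refine IntegrableOn.congr_fun (h.const_mul (exp α)) (fun x hx => ?_) measurableSet_Ioi
  simp only [rpow_one, neg_mul, bump_rpow_div_eq (mem_Ioi.1 hx)]

lemma integral_bump_rpow_div {α : ℝ} (hα : 0 < α) :
    ∫ x in Ioi 0, bump x ^ α / x = (gammaPDFReal α α 1)⁻¹ := by
  rw [setIntegral_congr_fun measurableSet_Ioi fun x hx => bump_rpow_div_eq (mem_Ioi.1 hx),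
    integral_const_mul, integral_rpow_mul_exp_neg_mul_Ioi hα hα, gammaPDFReal,
    if_pos zero_le_one, div_rpow zero_le_one hα.le]
  simp only [one_rpow, mul_one, exp_neg α]
  have := (Gamma_pos_of_pos hα).ne'
  have := (rpow_pos_of_pos hα α).ne'
  field_simp

lemma integral_bump_rpow_div_lt {α β : ℝ} (hα : 0 < α) (hαβ : α < β) :
    ∫ x in Ioi 0, bump x ^ β / x < ∫ x in Ioi 0, bump x ^ α / x := by
  have hint : IntegrableOn (fun x => bump x ^ α / x - bump x ^ β / x) (Ioi 0) :=
    (integrableOn_bump_rpow_div hα).sub (integrableOn_bump_rpow_div (hα.trans hαβ))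
  rw [← sub_pos, ← integral_sub (integrableOn_bump_rpow_div hα)
    (integrableOn_bump_rpow_div (hα.trans hαβ))]
  have hpos : ∀ x : ℝ, 1 < x → 0 < bump x ^ α / x - bump x ^ β / x := fun x hx => by
    have hx0 : 0 < x := zero_lt_one.trans hx
    rw [← sub_div]
    exact div_pos (sub_pos.2 (rpow_lt_rpow_of_exponent_gt (bump_pos hx0)
      (bump_lt_one hx.ne') hαβ)) hx0
  rw [setIntegral_pos_iff_support_of_nonneg_ae _ hint]
  · have hsub : Ioi 1 ⊆ Function.support (fun x => bump x ^ α / x - bump x ^ β / x) ∩ Ioi 0 :=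
      fun x (hx : 1 < x) => ⟨(hpos x hx).ne', zero_lt_one.trans hx⟩
    exact lt_of_lt_of_le (by simp) (measure_mono hsub)
  · refine (ae_restrict_iff' measurableSet_Ioi).2 (ae_of_all _ fun x (hx : 0 < x) => ?_)
    change 0 ≤ bump x ^ α / x - bump x ^ β / x
    rw [← sub_div]
    exact div_nonneg (sub_nonneg.2 (rpow_le_rpow_of_exponent_ge (bump_pos hx)
      (bump_le_one x) hαβ.le)) hx.le

lemma gammaPDFReal_self_one_lt {α β : ℝ} (hα : 0 < α) (hαβ : α < β) :
    gammaPDFReal α α 1 < gammaPDFReal β β 1 := by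
  have h := integral_bump_rpow_div_lt hα hαβ
  rwa [integral_bump_rpow_div hα, integral_bump_rpow_div (hα.trans hαβ),
    inv_lt_inv₀ (gammaPDFReal_pos (hα.trans hαβ) (hα.trans hαβ) one_pos)
      (gammaPDFReal_pos hα hα one_pos)] at h

lemma gammaPDFReal_self_sub_eq {α β x : ℝ} (hβ : 0 < β) (hx : 0 < x) :
    gammaPDFReal β β x - gammaPDFReal α α x =
      gammaPDFReal β β 1 * (bump x ^ α / x) *
        (bump x ^ (β - α) - gammaPDFReal α α 1 / gammaPDFReal β β 1) := by
  have hβ1 := (gammaPDFReal_pos hβ hβ one_pos).ne'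
  have hsplit : bump x ^ β = bump x ^ α * bump x ^ (β - α) := by
    rw [← rpow_add (bump_pos hx), add_sub_cancel]
  rw [gammaPDFReal_self_eq hx, gammaPDFReal_self_eq (α := α) hx, hsplit]
  field_simp

lemma exists_Ioo_superlevel_bump_rpow {p c : ℝ} (hp : 0 < p) (hc0 : 0 < c) (hc1 : c < 1) :
    ∃ a b, 0 < a ∧ a < 1 ∧ 1 < b ∧ (∀ x ∈ Ioo a b, c < bump x ^ p) ∧
      ∀ x, (0 ≤ x ∧ x < a) ∨ b < x → bump x ^ p < c := by
  have hrpow := strictMonoOn_rpow_Ici_of_exponent_pos hp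
  have hnonneg : MapsTo bump (Ici 0) (Ici 0) := fun _ hx => bump_nonneg hx
  have htop : Tendsto (fun x => bump x ^ p) atTop (𝓝 0) := by
    simpa [zero_rpow hp.ne'] using tendsto_bump_atTop.rpow_const (Or.inr hp.le)
  exact exists_Ioo_superlevel_of_unimodal zero_le_one
    (continuous_bump.rpow_const fun _ => Or.inr hp.le).continuousOn
    (hrpow.comp (strictMonoOn_bump.mono Icc_subset_Iic_self)
      (hnonneg.mono_left Icc_subset_Ici_self))
    (hrpow.comp_strictAntiOn strictAntiOn_bump (hnonneg.mono_left (Ici_subset_Ici.2 zero_le_one)))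
    (by simpa [bump_zero, zero_rpow hp.ne'] using hc0)
    (by simpa [bump_one] using hc1)
    (htop.eventually_lt_const hc0)

/-- For `α₂ > α₁ > 0`, the derivative of `Δ(x) = P(Gamma(α₂,α₂) < x) − P(Gamma(α₁,α₁) < x)`,
which is the difference of the corresponding densities, is positive on an interval `(a,b)`
containing `1` and negative on `(0,a) ∪ (b,∞)`. -/
theorem gamma_pdf_diff_sign (a1 a2 : ℝ) (h1 : 0 < a1) (h12 : a1 < a2) :
    ∃ a b : ℝ, a < 1 ∧ 1 < b ∧
      (∀ x ∈ Ioo a b, 0 < gammaPDFReal a2 a2 x - gammaPDFReal a1 a1 x) ∧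
      (∀ x : ℝ, (0 < x ∧ x < a) ∨ b < x →
        gammaPDFReal a2 a2 x - gammaPDFReal a1 a1 x < 0) := by
  have h2 : 0 < a2 := h1.trans h12
  have hp1 := gammaPDFReal_pos h1 h1 one_pos
  have hp2 := gammaPDFReal_pos h2 h2 one_pos
  obtain ⟨a, b, ha0, ha1, hb1, hin, hout⟩ := exists_Ioo_superlevel_bump_rpow (sub_pos.2 h12)
    (div_pos hp1 hp2) ((div_lt_one hp2).2 (gammaPDFReal_self_one_lt h1 h12))
  have hfactor : ∀ x, 0 < x → 0 < gammaPDFReal a2 a2 1 * (bump x ^ a1 / x) := fun x hx =>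
    mul_pos hp2 (div_pos (rpow_pos_of_pos (bump_pos hx) _) hx)
  refine ⟨a, b, ha1, hb1, fun x hx => ?_, fun x hx => ?_⟩
  · have hx0 : 0 < x := ha0.trans hx.1
    rw [gammaPDFReal_self_sub_eq h2 hx0]
    exact mul_pos (hfactor x hx0) (sub_pos.2 (hin x hx))
  · have hx0 : 0 < x := hx.elim And.left fun hbx => zero_lt_one.trans (hb1.trans hbx)
    rw [gammaPDFReal_self_sub_eq h2 hx0]
    exact mul_neg_of_pos_of_neg (hfactor x hx0)
      (sub_neg.2 (hout x (hx.imp_left fun h => ⟨h.1.le, h.2⟩)))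
end

section
/- For fixed ε ∈ (0,1) and r ≥ 1, the function n ↦ P(Q(nr) < 1−ε), where Q(m) ~ Gamma(m/2, m/2), is strictly decreasing over integers n ≥ 1. -/
open MeasureTheory ProbabilityTheory Real Set Function

/-!
For `t > 0` the Gamma(c, c) density is a constant times `exp (-c * subLog t) / t`, where
`subLog t = t - log t` decreases on `(0, 1]` and increases on `[1, ∞)`. Fold the mass above `1`
onto `(0, 1)` by matching each `t > 1` with the point `w < 1` on the same level of `subLog`. Since
`t * density t` depends on `t` only through `subLog t`, the folded density is `1 + foldWeight w`
times the original one, with `foldWeight` independent of `c` and increasing (because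
`w * subLogConj w < 1`). Then `P(Q < x)` is the integral of the decreasing function
`condLowerTail x` against the folded density, whereas on `(0, 1)` the likelihood ratio of
Gamma(b, b) to Gamma(a, a) is strictly increasing: a strict Chebyshev-type inequality concludes.
-/

/-- Integrating the integrand of `h_nonpos` over `μ ⊗ μ` gives twice the difference of the two
sides. -/
theorem integral_mul_mul_integral_lt_of_antivary {α : Type*} [MeasurableSpace α] {μ : Measure α}
    [SFinite μ] {ψ p q : α → ℝ} (hp : Integrable p μ) (hq : Integrable q μ)
    (hψp : Integrable (fun a ↦ ψ a * p a) μ) (hψq : Integrable (fun a ↦ ψ a * q a) μ)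
    (h_nonpos : ∀ᵐ z ∂μ.prod μ, (ψ z.1 - ψ z.2) * (q z.1 * p z.2 - p z.1 * q z.2) ≤ 0)
    (h_neg : 0 < μ.prod μ {z | (ψ z.1 - ψ z.2) * (q z.1 * p z.2 - p z.1 * q z.2) < 0}) :
    (∫ a, ψ a * q a ∂μ) * ∫ a, p a ∂μ < (∫ a, ψ a * p a ∂μ) * ∫ a, q a ∂μ := by
  let F : α × α → ℝ := fun z ↦ (ψ z.1 - ψ z.2) * (q z.1 * p z.2 - p z.1 * q z.2)
  have i₁ := hψq.mul_prod hp
  have i₂ := hψp.mul_prod hq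
  have i₃ := hq.mul_prod hψp
  have i₄ := hp.mul_prod hψq
  have i₁₂ : Integrable (fun z ↦ ψ z.1 * q z.1 * p z.2 - ψ z.1 * p z.1 * q z.2) (μ.prod μ) :=
    i₁.sub i₂
  have i₃₄ : Integrable (fun z ↦ q z.1 * (ψ z.2 * p z.2) - p z.1 * (ψ z.2 * q z.2)) (μ.prod μ) :=
    i₃.sub i₄
  have hF : F = fun z ↦ ψ z.1 * q z.1 * p z.2 - ψ z.1 * p z.1 * q z.2
      - (q z.1 * (ψ z.2 * p z.2) - p z.1 * (ψ z.2 * q z.2)) := by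
    ext; simp only [F]; ring
  have hFint : Integrable F (μ.prod μ) := hF ▸ i₁₂.sub i₃₄
  have hF_eq : ∫ z, F z ∂μ.prod μ
      = 2 * ((∫ a, ψ a * q a ∂μ) * (∫ a, p a ∂μ) - (∫ a, ψ a * p a ∂μ) * ∫ a, q a ∂μ) := by
    simp only [hF]
    rw [integral_sub i₁₂ i₃₄, integral_sub i₁ i₂, integral_sub i₃ i₄,
      integral_prod_mul (fun a ↦ ψ a * q a) p, integral_prod_mul (fun a ↦ ψ a * p a) q,
      integral_prod_mul q (fun a ↦ ψ a * p a), integral_prod_mul p (fun a ↦ ψ a * q a)]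
    ring
  have h_pos : 0 < ∫ z, -F z ∂μ.prod μ := by
    refine (integral_pos_iff_support_of_nonneg_ae ?_ hFint.neg).2 (h_neg.trans_le ?_)
    · filter_upwards [h_nonpos] with z hz using neg_nonneg.2 hz
    · exact measure_mono fun z hz ↦ neg_ne_zero.2 (ne_of_lt hz)
  rw [integral_neg, hF_eq] at h_pos
  linarith

namespace GammaTail

noncomputable def subLog (t : ℝ) : ℝ := t - log t

lemma hasDerivAt_subLog {t : ℝ} (ht : t ≠ 0) : HasDerivAt subLog (1 - t⁻¹) t :=
  (hasDerivAt_id t).sub (hasDerivAt_log ht)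

lemma continuousOn_subLog : ContinuousOn subLog {0}ᶜ :=
  continuousOn_id.sub continuousOn_log

lemma one_lt_subLog {t : ℝ} (ht : 0 < t) (ht₁ : t ≠ 1) : 1 < subLog t := by
  have := log_lt_sub_one_of_pos ht ht₁
  rw [subLog]
  linarith

lemma strictMonoOn_subLog : StrictMonoOn subLog (Ici 1) := by
  refine strictMonoOn_of_deriv_pos (convex_Ici 1)
    (continuousOn_subLog.mono fun t (ht : 1 ≤ t) ↦ (zero_lt_one.trans_le ht).ne') fun t ht ↦ ?_
  rw [interior_Ici, mem_Ioi] at ht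
  rw [(hasDerivAt_subLog (by positivity)).deriv, sub_pos]
  exact inv_lt_one_of_one_lt₀ ht

lemma strictAntiOn_subLog : StrictAntiOn subLog (Ioc 0 1) := by
  refine strictAntiOn_of_deriv_neg (convex_Ioc 0 1)
    (continuousOn_subLog.mono fun t ht ↦ ht.1.ne') fun t ht ↦ ?_
  rw [interior_Ioc] at ht
  rw [(hasDerivAt_subLog ht.1.ne').deriv, sub_neg]
  exact (one_lt_inv₀ ht.1).2 ht.2

lemma surjOn_subLog_Ioi : SurjOn subLog (Ioi 1) (Ioi 1) := by
  intro c (hc : 1 < c)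
  have hexp : c ≤ subLog (exp c) := by
    rw [subLog, log_exp]
    nlinarith [quadratic_le_exp_of_nonneg (by linarith : 0 ≤ c)]
  have hcont : ContinuousOn subLog (Icc 1 (exp c)) :=
    continuousOn_subLog.mono fun t ht ↦ (zero_lt_one.trans_le ht.1).ne'
  obtain ⟨t, ht, rfl⟩ := intermediate_value_Ioc (by linarith [add_one_le_exp c]) hcont
    ⟨by simpa [subLog] using hc, hexp⟩
  exact ⟨t, ht.1, rfl⟩

lemma surjOn_subLog_Ioo : SurjOn subLog (Ioo 0 1) (Ioi 1) := by
  intro c (hc : 1 < c)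
  have hexp : c < subLog (exp (-c)) := by
    rw [subLog, log_exp]
    linarith [exp_pos (-c)]
  have hcont : ContinuousOn subLog (Icc (exp (-c)) 1) :=
    continuousOn_subLog.mono fun t ht ↦ (exp_pos (-c)).trans_le ht.1 |>.ne'
  obtain ⟨t, ht, rfl⟩ := intermediate_value_Ico' (exp_lt_one_iff.2 (by linarith)).le hcont
    ⟨by simpa [subLog] using hc, hexp.le⟩
  exact ⟨t, ⟨(exp_pos _).trans_le ht.1, ht.2⟩, rfl⟩

lemma bijOn_subLog_Ioi : BijOn subLog (Ioi 1) (Ioi 1) :=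
  ⟨fun t (ht : 1 < t) ↦ one_lt_subLog (by linarith) ht.ne',
    strictMonoOn_subLog.injOn.mono Ioi_subset_Ici_self, surjOn_subLog_Ioi⟩

lemma subLog_lt_subLog_inv {w : ℝ} (hw : w ∈ Ioo 0 1) : subLog w < subLog w⁻¹ := by
  have h := self_lt_sinh_iff.2 (log_pos ((one_lt_inv₀ hw.1).2 hw.2))
  rw [sinh_log (inv_pos.2 hw.1), inv_inv, log_inv] at h
  rw [subLog, subLog, log_inv]
  linarith

noncomputable def subLogInv : ℝ → ℝ := invFunOn subLog (Ioi 1)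

lemma invOn_subLogInv : InvOn subLogInv subLog (Ioi 1) (Ioi 1) :=
  bijOn_subLog_Ioi.invOn_invFunOn

lemma bijOn_subLogInv : BijOn subLogInv (Ioi 1) (Ioi 1) :=
  bijOn_subLog_Ioi.symm invOn_subLogInv.symm

lemma strictMonoOn_subLogInv : StrictMonoOn subLogInv (Ioi 1) := by
  intro c hc d hd hcd
  by_contra! h
  have := strictMonoOn_subLog.monotoneOn (Ioi_subset_Ici_self (bijOn_subLogInv.mapsTo hd))
    (Ioi_subset_Ici_self (bijOn_subLogInv.mapsTo hc)) h
  rw [invOn_subLogInv.2 hc, invOn_subLogInv.2 hd] at this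
  exact this.not_gt hcd

lemma hasDerivAt_subLogInv {c : ℝ} (hc : 1 < c) :
    HasDerivAt subLogInv (1 - (subLogInv c)⁻¹)⁻¹ c := by
  have h₁ : 1 < subLogInv c := bijOn_subLogInv.mapsTo hc
  have hcont : ContinuousAt subLogInv c :=
    strictMonoOn_subLogInv.continuousAt_of_image_mem_nhds (Ioi_mem_nhds hc)
      (by rw [bijOn_subLogInv.image_eq]; exact Ioi_mem_nhds h₁)
  refine HasDerivAt.of_local_left_inverse hcont (hasDerivAt_subLog (by positivity)) ?_ ?_
  · rw [sub_ne_zero]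
    exact (inv_lt_one_of_one_lt₀ h₁).ne'
  · filter_upwards [Ioi_mem_nhds hc] with d hd using invOn_subLogInv.2 hd

lemma mapsTo_subLog_Ioo : MapsTo subLog (Ioo 0 1) (Ioi 1) :=
  fun _ hw ↦ one_lt_subLog hw.1 hw.2.ne

noncomputable def subLogConj : ℝ → ℝ := subLogInv ∘ subLog

lemma one_lt_subLogConj {w : ℝ} (hw : w ∈ Ioo 0 1) : 1 < subLogConj w :=
  bijOn_subLogInv.mapsTo (mapsTo_subLog_Ioo hw)

lemma subLog_subLogConj {w : ℝ} (hw : w ∈ Ioo 0 1) : subLog (subLogConj w) = subLog w :=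
  invOn_subLogInv.2 (mapsTo_subLog_Ioo hw)

lemma image_subLogConj : subLogConj '' Ioo 0 1 = Ioi 1 := by
  rw [subLogConj, image_comp, surjOn_subLog_Ioo.image_eq_of_mapsTo mapsTo_subLog_Ioo,
    bijOn_subLogInv.image_eq]

lemma injOn_subLogConj : InjOn subLogConj (Ioo 0 1) :=
  bijOn_subLogInv.injOn.comp (strictAntiOn_subLog.injOn.mono Ioo_subset_Ioc_self)
    mapsTo_subLog_Ioo

lemma hasDerivAt_subLogConj {w : ℝ} (hw : w ∈ Ioo 0 1) :
    HasDerivAt subLogConj (subLogConj w * (w - 1) / ((subLogConj w - 1) * w)) w := by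
  refine ((hasDerivAt_subLogInv (mapsTo_subLog_Ioo hw)).comp w
    (hasDerivAt_subLog hw.1.ne')).congr_deriv ?_
  change (1 - (subLogConj w)⁻¹)⁻¹ * (1 - w⁻¹) = _
  have : 1 < subLogConj w := one_lt_subLogConj hw
  have : subLogConj w - 1 ≠ 0 := by linarith
  have : subLogConj w ≠ 0 := by linarith
  have : w ≠ 0 := hw.1.ne'
  field_simp

lemma mul_subLogConj_lt_one {w : ℝ} (hw : w ∈ Ioo 0 1) : w * subLogConj w < 1 := by
  have h₁ : 1 < w⁻¹ := (one_lt_inv₀ hw.1).2 hw.2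
  have : subLogConj w < w⁻¹ := by
    refine (strictMonoOn_subLog.lt_iff_lt (Ioi_subset_Ici_self (one_lt_subLogConj hw))
      (Ioi_subset_Ici_self h₁)).1 ?_
    rw [subLog_subLogConj hw]
    exact subLog_lt_subLog_inv hw
  calc w * subLogConj w < w * w⁻¹ := mul_lt_mul_of_pos_left this hw.1
    _ = 1 := mul_inv_cancel₀ hw.1.ne'

noncomputable def foldWeight (w : ℝ) : ℝ := (1 - w) / (subLogConj w - 1)

lemma foldWeight_nonneg {w : ℝ} (hw : w ∈ Ioo 0 1) : 0 ≤ foldWeight w :=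
  div_nonneg (by linarith [hw.2]) (by linarith [one_lt_subLogConj hw])

lemma hasDerivAt_foldWeight {w : ℝ} (hw : w ∈ Ioo 0 1) :
    HasDerivAt foldWeight ((1 - w * subLogConj w) * (subLogConj w - w)
      / ((subLogConj w - 1) ^ 3 * w)) w := by
  have h₁ : subLogConj w - 1 ≠ 0 := by linarith [one_lt_subLogConj hw]
  have : w ≠ 0 := hw.1.ne'
  refine (((hasDerivAt_id' w).const_sub 1).div ((hasDerivAt_subLogConj hw).sub_const 1)
    h₁).congr_deriv ?_
  field_simp
  ring

lemma monotoneOn_foldWeight : MonotoneOn foldWeight (Ioo 0 1) := by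
  refine monotoneOn_of_deriv_nonneg (convex_Ioo 0 1)
    (fun w hw ↦ (hasDerivAt_foldWeight hw).continuousAt.continuousWithinAt)
    (fun w hw ↦
      (hasDerivAt_foldWeight (interior_subset hw)).differentiableAt.differentiableWithinAt)
    fun w hw ↦ ?_
  rw [interior_Ioo] at hw
  rw [(hasDerivAt_foldWeight hw).deriv]
  have : 1 < subLogConj w := one_lt_subLogConj hw
  have : w * subLogConj w < 1 := mul_subLogConj_lt_one hw
  have : 0 < w := hw.1
  refine div_nonneg (mul_nonneg ?_ ?_) (by positivity) <;> nlinarith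

section Fold

variable {f : ℝ → ℝ} (hf : ∀ s > 0, ∀ t > 0, subLog s = subLog t → s * f s = t * f t)
include hf

lemma abs_deriv_subLogConj_mul {w : ℝ} (hw : w ∈ Ioo 0 1) :
    |subLogConj w * (w - 1) / ((subLogConj w - 1) * w)| * f (subLogConj w)
      = foldWeight w * f w := by
  have h₁ : 1 < subLogConj w := one_lt_subLogConj hw
  have hw₀ : 0 < w := hw.1
  have : subLogConj w - 1 ≠ 0 := by linarith
  have hf' := hf _ (by linarith) w hw₀ (subLog_subLogConj hw)
  rw [abs_div, abs_mul, abs_mul, abs_of_pos (by linarith : 0 < subLogConj w),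
    abs_of_neg (by linarith [hw.2] : w - 1 < 0), abs_of_pos (by linarith : 0 < subLogConj w - 1),
    abs_of_pos hw₀, foldWeight]
  field_simp
  linear_combination (1 - w) * hf'

lemma integral_Ioi_one_eq_integral_foldWeight_mul :
    ∫ t in Ioi 1, f t = ∫ w in Ioo 0 1, foldWeight w * f w := by
  rw [← image_subLogConj, integral_image_eq_integral_abs_deriv_smul measurableSet_Ioo
    (fun w hw ↦ (hasDerivAt_subLogConj hw).hasDerivWithinAt) injOn_subLogConj]
  exact setIntegral_congr_fun measurableSet_Ioo fun w hw ↦ abs_deriv_subLogConj_mul hf hw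

lemma integrableOn_foldWeight_mul (hint : IntegrableOn f (Ioi 1)) :
    IntegrableOn (fun w ↦ foldWeight w * f w) (Ioo 0 1) := by
  rw [← image_subLogConj, integrableOn_image_iff_integrableOn_abs_deriv_smul measurableSet_Ioo
    (fun w hw ↦ (hasDerivAt_subLogConj hw).hasDerivWithinAt) injOn_subLogConj] at hint
  exact hint.congr_fun (fun w hw ↦ abs_deriv_subLogConj_mul hf hw) measurableSet_Ioo

lemma setIntegral_Ioi_zero_eq_one_add_foldWeight_mul (hint : IntegrableOn f (Ioi 0)) :
    ∫ t in Ioi 0, f t = ∫ w in Ioo 0 1, (1 + foldWeight w) * f w := by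
  have hint₁ : IntegrableOn f (Ioi 1) := hint.mono_set (Ioi_subset_Ioi zero_le_one)
  have hint₀ : IntegrableOn f (Ioo 0 1) := hint.mono_set Ioo_subset_Ioi_self
  simp_rw [add_mul, one_mul]
  rw [integral_add hint₀ (integrableOn_foldWeight_mul hf hint₁),
    ← integral_Ioi_one_eq_integral_foldWeight_mul hf, ← integral_Ioc_eq_integral_Ioo,
    ← intervalIntegral.integral_of_le zero_le_one,
    intervalIntegral.integral_interval_add_Ioi hint hint₁]

lemma integrableOn_one_add_foldWeight_mul (hint : IntegrableOn f (Ioi 0)) :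
    IntegrableOn (fun w ↦ (1 + foldWeight w) * f w) (Ioo 0 1) := by
  simp_rw [add_mul, one_mul]
  exact (hint.mono_set Ioo_subset_Ioi_self).add
    (integrableOn_foldWeight_mul hf (hint.mono_set (Ioi_subset_Ioi zero_le_one)))

end Fold

lemma mul_gammaPDFReal_self {c t : ℝ} (ht : 0 < t) :
    t * gammaPDFReal c c t = c ^ c / Gamma c * exp (-(c * subLog t)) := by
  rw [gammaPDFReal, if_pos ht.le, subLog, rpow_sub_one ht.ne', rpow_def_of_pos ht]
  field_simp
  rw [mul_assoc, ← exp_add]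
  ring_nf

lemma gammaPDFReal_self_mul_lt {a b u v : ℝ} (ha : 0 < a) (hab : a < b) (hu : 0 < u) (hv : 0 < v)
    (huv : subLog v < subLog u) :
    gammaPDFReal b b u * gammaPDFReal a a v < gammaPDFReal a a u * gammaPDFReal b b v := by
  have hb : 0 < b := ha.trans hab
  have hC : 0 < a ^ a / Gamma a * (b ^ b / Gamma b) := by
    have := Gamma_pos_of_pos ha
    have := Gamma_pos_of_pos hb
    positivity
  have hexp : exp (-(b * subLog u)) * exp (-(a * subLog v))
      < exp (-(a * subLog u)) * exp (-(b * subLog v)) := by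
    rw [← exp_add, ← exp_add, exp_lt_exp]
    nlinarith
  have key : (u * gammaPDFReal b b u) * (v * gammaPDFReal a a v)
      < (u * gammaPDFReal a a u) * (v * gammaPDFReal b b v) := by
    rw [mul_gammaPDFReal_self hu, mul_gammaPDFReal_self hu, mul_gammaPDFReal_self hv,
      mul_gammaPDFReal_self hv]
    linear_combination mul_lt_mul_of_pos_left hexp hC
  refine lt_of_mul_lt_mul_left ?_ (mul_pos hu hv).le
  linear_combination key

lemma gammaMeasure_toReal_eq_setIntegral {a r : ℝ} (ha : 0 < a) (hr : 0 < r) {s : Set ℝ}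
    (hs : MeasurableSet s) :
    (gammaMeasure a r s).toReal = ∫ t in s ∩ Ioi 0, gammaPDFReal a r t := by
  rw [gammaMeasure, withDensity_apply _ hs]
  unfold gammaPDF
  rw [← integral_eq_lintegral_of_nonneg_ae (ae_of_all _ (gammaPDFReal_nonneg ha hr))
      (measurable_gammaPDFReal a r).aestronglyMeasurable]
  refine setIntegral_eq_of_subset_of_ae_sdiff_eq_zero hs.nullMeasurableSet inter_subset_left ?_
  filter_upwards [compl_mem_ae_iff.2 (measure_singleton (0 : ℝ))] with t (ht : t ≠ 0) hts
  have : t < 0 := lt_of_le_of_ne (not_lt.1 fun h ↦ hts.2 ⟨hts.1, h⟩) ht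
  rw [gammaPDFReal, if_neg this.not_ge]

lemma setIntegral_gammaPDFReal_Ioi {a r : ℝ} (ha : 0 < a) (hr : 0 < r) :
    ∫ t in Ioi 0, gammaPDFReal a r t = 1 := by
  have := isProbabilityMeasure_gammaMeasure ha hr
  simpa using (gammaMeasure_toReal_eq_setIntegral ha hr MeasurableSet.univ).symm

lemma integrableOn_gammaPDFReal {a r : ℝ} (ha : 0 < a) (hr : 0 < r) :
    IntegrableOn (gammaPDFReal a r) (Ioi 0) :=
  Integrable.of_integral_ne_zero (by rw [setIntegral_gammaPDFReal_Ioi ha hr]; exact one_ne_zero)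

lemma gammaMeasure_Iio_toReal {a r x : ℝ} (ha : 0 < a) (hr : 0 < r) :
    (gammaMeasure a r (Iio x)).toReal = ∫ t in Ioo 0 x, gammaPDFReal a r t := by
  rw [gammaMeasure_toReal_eq_setIntegral ha hr measurableSet_Iio, Iio_inter_Ioi]

lemma subLog_eq_imp_mul_gammaPDFReal_eq {c s t : ℝ} (hs : 0 < s) (ht : 0 < t)
    (h : subLog s = subLog t) : s * gammaPDFReal c c s = t * gammaPDFReal c c t := by
  rw [mul_gammaPDFReal_self hs, mul_gammaPDFReal_self ht, h]

noncomputable def foldedGammaPDF (c w : ℝ) : ℝ := (1 + foldWeight w) * gammaPDFReal c c w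

lemma integrableOn_foldedGammaPDF {c : ℝ} (hc : 0 < c) :
    IntegrableOn (foldedGammaPDF c) (Ioo 0 1) :=
  integrableOn_one_add_foldWeight_mul (fun _ hs _ ht ↦ subLog_eq_imp_mul_gammaPDFReal_eq hs ht)
    (integrableOn_gammaPDFReal hc hc)

lemma setIntegral_foldedGammaPDF {c : ℝ} (hc : 0 < c) :
    ∫ w in Ioo 0 1, foldedGammaPDF c w = 1 := by
  refine (setIntegral_Ioi_zero_eq_one_add_foldWeight_mul (fun _ hs _ ht ↦
    subLog_eq_imp_mul_gammaPDFReal_eq hs ht) (integrableOn_gammaPDFReal hc hc)).symm.trans ?_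
  exact setIntegral_gammaPDFReal_Ioi hc hc

lemma foldedGammaPDF_mul_lt {a b u v : ℝ} (ha : 0 < a) (hab : a < b) (hu : u ∈ Ioo 0 1)
    (hv : v ∈ Ioo 0 1) (huv : u < v) :
    foldedGammaPDF b u * foldedGammaPDF a v < foldedGammaPDF a u * foldedGammaPDF b v := by
  have hk : 0 < (1 + foldWeight u) * (1 + foldWeight v) := by
    have := foldWeight_nonneg hu
    have := foldWeight_nonneg hv
    positivity
  have := mul_lt_mul_of_pos_left (gammaPDFReal_self_mul_lt ha hab hu.1 hv.1
    (strictAntiOn_subLog (Ioo_subset_Ioc_self hu) (Ioo_subset_Ioc_self hv) huv)) hk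
  simp only [foldedGammaPDF]
  linear_combination this

/-- Given the folded point `w`, the conditional probability that the unfolded point lies below
`x ≤ 1`. -/
noncomputable def condLowerTail (x w : ℝ) : ℝ :=
  (Iio x).indicator (fun w ↦ (1 + foldWeight w)⁻¹) w

lemma condLowerTail_pos {x w : ℝ} (hw : w ∈ Ioo 0 1) (hwx : w < x) : 0 < condLowerTail x w := by
  rw [condLowerTail, indicator_of_mem (mem_Iio.2 hwx)]
  have := foldWeight_nonneg hw
  positivity

lemma condLowerTail_nonneg {x w : ℝ} (hw : w ∈ Ioo 0 1) : 0 ≤ condLowerTail x w := by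
  by_cases hwx : w < x
  · exact (condLowerTail_pos hw hwx).le
  · rw [condLowerTail, indicator_of_notMem (mt mem_Iio.1 hwx)]

lemma antitoneOn_condLowerTail (x : ℝ) : AntitoneOn (condLowerTail x) (Ioo 0 1) := by
  intro u hu v hv huv
  by_cases hvx : v < x
  · rw [condLowerTail, condLowerTail, indicator_of_mem (mem_Iio.2 hvx),
      indicator_of_mem (mem_Iio.2 (huv.trans_lt hvx))]
    have := foldWeight_nonneg hu
    exact inv_anti₀ (by positivity) (by linarith [monotoneOn_foldWeight hu hv huv])
  · rw [condLowerTail, indicator_of_notMem (mt mem_Iio.1 hvx)]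
    exact condLowerTail_nonneg hu

lemma condLowerTail_mul_foldedGammaPDF {c x w : ℝ} (hw : w ∈ Ioo 0 1) :
    condLowerTail x w * foldedGammaPDF c w = (Iio x).indicator (gammaPDFReal c c) w := by
  have : 1 + foldWeight w ≠ 0 := by linarith [foldWeight_nonneg hw]
  by_cases hwx : w < x
  · rw [condLowerTail, indicator_of_mem (mem_Iio.2 hwx), indicator_of_mem (mem_Iio.2 hwx),
      foldedGammaPDF, inv_mul_cancel_left₀ this]
  · rw [condLowerTail, indicator_of_notMem (mt mem_Iio.1 hwx),
      indicator_of_notMem (mt mem_Iio.1 hwx), zero_mul]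

lemma condLowerTail_sub_mul_foldedGammaPDF_nonpos {a b x u v : ℝ} (ha : 0 < a) (hab : a < b)
    (hu : u ∈ Ioo 0 1) (hv : v ∈ Ioo 0 1) :
    (condLowerTail x u - condLowerTail x v)
      * (foldedGammaPDF b u * foldedGammaPDF a v - foldedGammaPDF a u * foldedGammaPDF b v)
      ≤ 0 := by
  rcases lt_trichotomy u v with huv | rfl | hvu
  · exact mul_nonpos_of_nonneg_of_nonpos (sub_nonneg.2 (antitoneOn_condLowerTail x hu hv huv.le))
      (sub_nonpos.2 (foldedGammaPDF_mul_lt ha hab hu hv huv).le)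
  · simp
  · refine mul_nonpos_of_nonpos_of_nonneg
      (sub_nonpos.2 (antitoneOn_condLowerTail x hv hu hvu.le)) ?_
    linear_combination (foldedGammaPDF_mul_lt ha hab hv hu hvu).le

lemma condLowerTail_sub_mul_foldedGammaPDF_neg {a b x u v : ℝ} (ha : 0 < a) (hab : a < b)
    (hu : u ∈ Ioo 0 x) (hv : v ∈ Ioo x 1) :
    (condLowerTail x u - condLowerTail x v)
      * (foldedGammaPDF b u * foldedGammaPDF a v - foldedGammaPDF a u * foldedGammaPDF b v)
      < 0 := by
  have hu' : u ∈ Ioo 0 1 := ⟨hu.1, hu.2.trans hv.1 |>.trans hv.2⟩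
  have hv' : v ∈ Ioo 0 1 := ⟨hu.1.trans (hu.2.trans hv.1), hv.2⟩
  have : condLowerTail x v = 0 := indicator_of_notMem (fun h ↦ hv.1.not_gt (mem_Iio.1 h)) _
  rw [this, sub_zero]
  exact mul_neg_of_pos_of_neg (condLowerTail_pos hu' hu.2)
    (sub_neg.2 (foldedGammaPDF_mul_lt ha hab hu' hv' (hu.2.trans hv.1)))

lemma setIntegral_condLowerTail_mul_foldedGammaPDF {c x : ℝ} (hc : 0 < c) (hx : x ≤ 1) :
    ∫ w in Ioo 0 1, condLowerTail x w * foldedGammaPDF c w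
      = (gammaMeasure c c (Iio x)).toReal := by
  rw [setIntegral_congr_fun measurableSet_Ioo fun w hw ↦ condLowerTail_mul_foldedGammaPDF hw,
    setIntegral_indicator measurableSet_Iio, Ioo_inter_Iio, min_eq_right hx,
    gammaMeasure_Iio_toReal hc hc]

lemma integrableOn_condLowerTail_mul_foldedGammaPDF {c x : ℝ} (hc : 0 < c) :
    IntegrableOn (fun w ↦ condLowerTail x w * foldedGammaPDF c w) (Ioo 0 1) := by
  refine IntegrableOn.congr_fun ?_ (fun w hw ↦ (condLowerTail_mul_foldedGammaPDF hw).symm)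
    measurableSet_Ioo
  exact ((integrableOn_gammaPDFReal hc hc).mono_set Ioo_subset_Ioi_self).indicator
    measurableSet_Iio

theorem gammaMeasure_self_Iio_lt {a b x : ℝ} (ha : 0 < a) (hab : a < b) (hx : x ∈ Ioo 0 1) :
    (gammaMeasure b b (Iio x)).toReal < (gammaMeasure a a (Iio x)).toReal := by
  have hb : 0 < b := ha.trans hab
  have key := integral_mul_mul_integral_lt_of_antivary (ψ := condLowerTail x)
    (integrableOn_foldedGammaPDF ha) (integrableOn_foldedGammaPDF hb)
    (integrableOn_condLowerTail_mul_foldedGammaPDF ha)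
    (integrableOn_condLowerTail_mul_foldedGammaPDF hb) ?_ ?_
  · rwa [setIntegral_foldedGammaPDF ha, setIntegral_foldedGammaPDF hb, mul_one, mul_one,
      setIntegral_condLowerTail_mul_foldedGammaPDF ha hx.2.le,
      setIntegral_condLowerTail_mul_foldedGammaPDF hb hx.2.le] at key
  · rw [Measure.prod_restrict, ae_restrict_iff' (measurableSet_Ioo.prod measurableSet_Ioo)]
    exact ae_of_all _ fun z hz ↦ condLowerTail_sub_mul_foldedGammaPDF_nonpos ha hab hz.1 hz.2
  · refine lt_of_lt_of_le ?_ (measure_mono fun z (hz : z ∈ Ioo 0 x ×ˢ Ioo x 1) ↦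
      condLowerTail_sub_mul_foldedGammaPDF_neg ha hab hz.1 hz.2)
    rw [Measure.prod_prod, Measure.restrict_apply measurableSet_Ioo,
      Measure.restrict_apply measurableSet_Ioo, inter_eq_left.2 (Ioo_subset_Ioo_right hx.2.le),
      inter_eq_left.2 (Ioo_subset_Ioo_left hx.1.le), Real.volume_Ioo, Real.volume_Ioo]
    exact ENNReal.mul_pos (by simpa using hx.1) (by simpa using hx.2)

end GammaTail

open GammaTail in
/-- For fixed `ε ∈ (0,1)` and `r ≥ 1`, the map `n ↦ P(Q(nr) < 1−ε)`, where
`Q(m) ~ Gamma(m/2, m/2)`, is strictly decreasing over integers `n ≥ 1`. -/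
theorem gamma_lower_tail_strictAnti (ε : ℝ) (hε : ε ∈ Ioo (0:ℝ) 1) (r : ℕ) (hr : 1 ≤ r) :
    ∀ n m : ℕ, 1 ≤ n → n < m →
      (gammaMeasure ((m * r : ℕ) / 2 : ℝ) ((m * r : ℕ) / 2 : ℝ) (Iio (1 - ε))).toReal
        < (gammaMeasure ((n * r : ℕ) / 2 : ℝ) ((n * r : ℕ) / 2 : ℝ) (Iio (1 - ε))).toReal := by
  intro n m hn hnm
  have hnr : 0 < n * r := Nat.mul_pos hn hr
  have hnmr : n * r < m * r := Nat.mul_lt_mul_of_pos_right hnm hr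
  refine gammaMeasure_self_Iio_lt (by positivity) ?_ ⟨by linarith [hε.2], by linarith [hε.1]⟩
  gcongr
end
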